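/- arXiv:2511.12638 — 6 statements merged into one kernel-verified Lean document; each statement's English description precedes it below -/
import Mathlib

section
/- One-step diamond property for the reflexive closure of the checked dynamics: letting ↪⁼ denote the reflexive closure of the checked small-step relation ↪ of the language L, if C ↪⁼ C₁ and C ↪⁼ C₂ then there exists a configuration C' with C₁ ↪⁼ C' and C₂ ↪⁼ C'. -/
namespace Volta

/-- Statements of the language `L` of structured-CTAs.  Constants are drawn
from a type `C`, registers from `Reg`, shared-memory addresses from `Addr`,
and thread IDs from `TID`. -/
inductive Stmt (C Reg Addr TID : Type) : Type where
  | const (r : Reg) (c : C)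
  | binop (r r₁ r₂ : Reg)
  | copy (r r' : Reg)
  | read (r : Reg) (g : Addr)
  | write (g : Addr) (r : Reg)
  | sync (I : Set TID)

/-- A thread program: a finite sequence of statements ending in `return`. -/
inductive ThreadProg (C Reg Addr TID : Type) : Type where
  | ret
  | seq (s : Stmt C Reg Addr TID) (T : ThreadProg C Reg Addr TID)

/-- A configuration: shared memory `G`, register files `R`, program `P`. -/
structure Config (Val C Reg Addr TID : Type) : Type where
  G : Addr → Val
  R : TID → Reg → Val
  P : TID → ThreadProg C Reg Addr TID

/-- Memory-event contexts: for each address, per reader the set of threads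
that have not synchronized with that read, and the last writer together with
the set of threads that have not synchronized with that write. -/
abbrev MemEvs (Addr TID : Type) : Type :=
  Addr → (TID → Set TID) × (TID × Set TID)

variable {Val C Reg Addr TID : Type}

/-- Thread `i` has synchronized with all readers as required. -/
def noRacingRd (i : TID) (rd : TID → Set TID) : Prop :=
  ∀ j, i = j ∨ i ∉ rd j

/-- Thread `i` is, or has synchronized with, the last writer as required. -/
def noRacingWr (i : TID) (wr : TID × Set TID) : Prop :=
  i = wr.1 ∨ i ∉ wr.2

open Classical in
/-- `sync I` removes `I` from the recorded unsynchronized sets belonging to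
threads of `I`. -/
noncomputable def syncMem (I : Set TID) (X : MemEvs Addr TID) : MemEvs Addr TID :=
  fun g =>
    (fun i => if i ∈ I then (X g).1 i \ I else (X g).1 i,
     if (X g).2.1 ∈ I then ((X g).2.1, (X g).2.2 \ I) else (X g).2)

/-- The initial memory-event context `X_∅`, whose recorded unsynchronized sets
are all empty (the choice of the recorded "last writer" `t₀` is arbitrary). -/
def emptyMemEvs (t₀ : TID) : MemEvs Addr TID :=
  fun _ => (fun _ => (∅ : Set TID), (t₀, (∅ : Set TID)))

section Dynamics

variable [DecidableEq Reg] [DecidableEq Addr] [DecidableEq TID]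
variable (op : Val → Val → Val) (κ : C → Val)

/-- Thread-level unchecked small-step relation. -/
inductive TStep :
    (Addr → Val) → (Reg → Val) → ThreadProg C Reg Addr TID →
    (Addr → Val) → (Reg → Val) → ThreadProg C Reg Addr TID → Prop where
  | const {G : Addr → Val} {R : Reg → Val} {r : Reg} {c : C} {T} :
      TStep G R (.seq (.const r c) T) G (Function.update R r (κ c)) T
  | binop {G : Addr → Val} {R : Reg → Val} {r r₁ r₂ : Reg} {T} :
      TStep G R (.seq (.binop r r₁ r₂) T) G (Function.update R r (op (R r₁) (R r₂))) T
  | copy {G : Addr → Val} {R : Reg → Val} {r r' : Reg} {T} :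
      TStep G R (.seq (.copy r r') T) G (Function.update R r (R r')) T
  | read {G : Addr → Val} {R : Reg → Val} {r : Reg} {g : Addr} {T} :
      TStep G R (.seq (.read r g) T) G (Function.update R r (G g)) T
  | write {G : Addr → Val} {R : Reg → Val} {g : Addr} {r : Reg} {T} :
      TStep G R (.seq (.write g r) T) (Function.update G g (R r)) R T

/-- Top-level unchecked small-step relation `→`:
rule `Schd` advances any single thread not blocked at a `sync`, and rule
`Sync`, when every thread of `I` is either at `sync I` or at `return`,
simultaneously advances all threads of `I` past their `sync`. -/
inductive Step : Config Val C Reg Addr TID → Config Val C Reg Addr TID → Prop where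
  | schd {c : Config Val C Reg Addr TID} {i : TID} {G' : Addr → Val}
      {R' : Reg → Val} {T' : ThreadProg C Reg Addr TID} :
      TStep op κ c.G (c.R i) (c.P i) G' R' T' →
      Step c ⟨G', Function.update c.R i R', Function.update c.P i T'⟩
  | sync {c : Config Val C Reg Addr TID} {I : Set TID}
      {P' : TID → ThreadProg C Reg Addr TID} :
      (∀ i ∉ I, P' i = c.P i) →
      (∀ i ∈ I, (c.P i = .ret ∧ P' i = .ret) ∨
        ∃ T, c.P i = .seq (.sync I) T ∧ P' i = T) →
      Step c ⟨c.G, c.R, P'⟩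

/-- `→*`: reflexive-transitive closure of the unchecked step relation. -/
def Steps : Config Val C Reg Addr TID → Config Val C Reg Addr TID → Prop :=
  Relation.ReflTransGen (Step op κ)

/-- Result of a checked thread-level step: a new configuration or the error `⊥`. -/
inductive CTRes (Val C Reg Addr TID : Type) : Type where
  | ok (X : MemEvs Addr TID) (G : Addr → Val) (R : Reg → Val)
      (T : ThreadProg C Reg Addr TID)
  | err

/-- Thread-level checked small-step relation `↪ᵢ`: a read by thread `i`
updates the reader entry of `i` to the set of all TIDs and requires
`noRacingWr`; a write by `i` requires both `noRacingRd` and `noRacingWr` and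
sets the writer record to `(i, univ)`; a read or write whose side condition
fails steps to the error `⊥`. -/
inductive CTStep (i : TID) :
    MemEvs Addr TID → (Addr → Val) → (Reg → Val) → ThreadProg C Reg Addr TID →
    CTRes Val C Reg Addr TID → Prop where
  | const {X : MemEvs Addr TID} {G : Addr → Val} {R : Reg → Val} {r : Reg} {c : C} {T} :
      CTStep i X G R (.seq (.const r c) T) (.ok X G (Function.update R r (κ c)) T)
  | binop {X : MemEvs Addr TID} {G : Addr → Val} {R : Reg → Val} {r r₁ r₂ : Reg} {T} :
      CTStep i X G R (.seq (.binop r r₁ r₂) T)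
        (.ok X G (Function.update R r (op (R r₁) (R r₂))) T)
  | copy {X : MemEvs Addr TID} {G : Addr → Val} {R : Reg → Val} {r r' : Reg} {T} :
      CTStep i X G R (.seq (.copy r r') T) (.ok X G (Function.update R r (R r')) T)
  | read {X : MemEvs Addr TID} {G : Addr → Val} {R : Reg → Val} {r : Reg} {g : Addr} {T}
      (hw : noRacingWr i (X g).2) :
      CTStep i X G R (.seq (.read r g) T)
        (.ok (Function.update X g (Function.update (X g).1 i (Set.univ : Set TID), (X g).2))
          G (Function.update R r (G g)) T)
  | write {X : MemEvs Addr TID} {G : Addr → Val} {R : Reg → Val} {g : Addr} {r : Reg} {T}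
      (hr : noRacingRd i (X g).1) (hw : noRacingWr i (X g).2) :
      CTStep i X G R (.seq (.write g r) T)
        (.ok (Function.update X g ((X g).1, (i, (Set.univ : Set TID))))
          (Function.update G g (R r)) R T)
  | readBad {X : MemEvs Addr TID} {G : Addr → Val} {R : Reg → Val} {r : Reg} {g : Addr} {T}
      (hw : ¬ noRacingWr i (X g).2) :
      CTStep i X G R (.seq (.read r g) T) .err
  | writeBad {X : MemEvs Addr TID} {G : Addr → Val} {R : Reg → Val} {g : Addr} {r : Reg} {T}
      (hbad : ¬ noRacingRd i (X g).1 ∨ ¬ noRacingWr i (X g).2) :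
      CTStep i X G R (.seq (.write g r) T) .err

/-- A checked configuration: a tuple `(X, G, R, P)` or the error `⊥`. -/
inductive CConfig (Val C Reg Addr TID : Type) : Type where
  | ok (X : MemEvs Addr TID) (c : Config Val C Reg Addr TID)
  | err

/-- Top-level checked small-step relation `↪`. -/
inductive CStep : CConfig Val C Reg Addr TID → CConfig Val C Reg Addr TID → Prop where
  | schd {X : MemEvs Addr TID} {c : Config Val C Reg Addr TID} {i : TID}
      {X' : MemEvs Addr TID} {G' : Addr → Val} {R' : Reg → Val}
      {T' : ThreadProg C Reg Addr TID} :
      CTStep op κ i X c.G (c.R i) (c.P i) (.ok X' G' R' T') →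
      CStep (.ok X c) (.ok X' ⟨G', Function.update c.R i R', Function.update c.P i T'⟩)
  | schdBad {X : MemEvs Addr TID} {c : Config Val C Reg Addr TID} {i : TID} :
      CTStep op κ i X c.G (c.R i) (c.P i) .err →
      CStep (.ok X c) .err
  | sync {X : MemEvs Addr TID} {c : Config Val C Reg Addr TID} {I : Set TID}
      {P' : TID → ThreadProg C Reg Addr TID} :
      (∀ i ∉ I, P' i = c.P i) →
      (∀ i ∈ I, (c.P i = .ret ∧ P' i = .ret) ∨
        ∃ T, c.P i = .seq (.sync I) T ∧ P' i = T) →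
      CStep (.ok X c) (.ok (syncMem I X) ⟨c.G, c.R, P'⟩)

/-- `↪*`: reflexive-transitive closure of the checked step relation. -/
def CSteps : CConfig Val C Reg Addr TID → CConfig Val C Reg Addr TID → Prop :=
  Relation.ReflTransGen (CStep op κ)

/-- A memory access (an unchecked `Schd` step that is a read (`w = false`)
or write (`w = true`) by thread `i` to address `g`). -/
inductive AccStep (i : TID) (g : Addr) :
    Bool → Config Val C Reg Addr TID → Config Val C Reg Addr TID → Prop where
  | read {c : Config Val C Reg Addr TID} {r : Reg} {T : ThreadProg C Reg Addr TID}
      (h : c.P i = .seq (.read r g) T) :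
      AccStep i g false c
        ⟨c.G, Function.update c.R i (Function.update (c.R i) r (c.G g)),
          Function.update c.P i T⟩
  | write {c : Config Val C Reg Addr TID} {r : Reg} {T : ThreadProg C Reg Addr TID}
      (h : c.P i = .seq (.write g r) T) :
      AccStep i g true c
        ⟨Function.update c.G g (c.R i r), c.R, Function.update c.P i T⟩

/-- `P` has a data race: there are two memory accesses by distinct threads to
the same address, at least one a write, and two unchecked traces with a common
prefix after which the first access immediately precedes the second in one
trace and vice versa in the other. -/
def HasDataRace (P : TID → ThreadProg C Reg Addr TID) : Prop :=
  ∃ (G₀ : Addr → Val) (R₀ : TID → Reg → Val)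
    (c c₁ c₁' c₂ c₂' : Config Val C Reg Addr TID)
    (i j : TID) (g : Addr) (wi wj : Bool),
    i ≠ j ∧ (wi = true ∨ wj = true) ∧
    Steps op κ ⟨G₀, R₀, P⟩ c ∧
    AccStep i g wi c c₁ ∧ AccStep j g wj c₁ c₁' ∧
    AccStep j g wj c c₂ ∧ AccStep i g wi c₂ c₂'

/-- `(G, R, P) ↓ (G', R')`: the unchecked dynamics reaches a configuration
with every thread at `return`, with final shared memory `G'` and registers `R'`. -/
def Terminates (c : Config Val C Reg Addr TID)
    (G' : Addr → Val) (R' : TID → Reg → Val) : Prop :=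
  ∃ P', Steps op κ c ⟨G', R', P'⟩ ∧ ∀ i, P' i = ThreadProg.ret

/-- `(X, G, R, P) ↪↓ (G', R')`: the checked dynamics reaches a configuration
with every thread at `return`, with final shared memory `G'` and registers `R'`. -/
def CTerminates (X : MemEvs Addr TID) (c : Config Val C Reg Addr TID)
    (G' : Addr → Val) (R' : TID → Reg → Val) : Prop :=
  ∃ X' P', CSteps op κ (.ok X c) (.ok X' ⟨G', R', P'⟩) ∧ ∀ i, P' i = ThreadProg.ret

end Dynamics

end Volta

/-!
Two checked steps from the same configuration are joined in at most one step each. Steps of the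
same thread, or two barriers over the same set, are equal, since the checked thread step is
deterministic. Steps of distinct threads commute, except for conflicting accesses to one address
(at least one a write): then the recorded access of the first thread makes the second one race,
and both orders fail. A failed access stays failed after another thread's step or a barrier it
does not take part in, because neither can remove the failing thread from an unsynchronized set.
A thread step commutes with a barrier not containing the thread, and two different barriers
commute because a thread taking part in both must already have returned.
-/

namespace Relation

lemma join_reflGen_of_diamond {α : Type*} {r : α → α → Prop}
    (h : ∀ a b c, r a b → r a c → Join (ReflGen r) b c) {a b c : α}
    (hab : ReflGen r a b) (hac : ReflGen r a c) : Join (ReflGen r) b c := by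
  cases hab with
  | refl => exact ⟨c, hac, .refl⟩
  | single hab =>
    cases hac with
    | refl => exact ⟨b, .refl, .single hab⟩
    | single hac => exact h _ _ _ hab hac

end Relation

namespace Volta

open Function Relation

section MemEvs

variable {Addr TID : Type}

lemma syncMem_apply_congr {X Y : MemEvs Addr TID} {g g' : Addr} (I : Set TID)
    (h : X g = Y g') : syncMem I X g = syncMem I Y g' := by
  simp only [syncMem]
  rw [h]

lemma syncMem_apply_snd_congr {X Y : MemEvs Addr TID} {g g' : Addr} (I : Set TID)
    (h : (X g).2 = (Y g').2) : (syncMem I X g).2 = (syncMem I Y g').2 := by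
  simp only [syncMem]
  rw [h]

lemma syncMem_comm (I J : Set TID) (X : MemEvs Addr TID) :
    syncMem I (syncMem J X) = syncMem J (syncMem I X) := by
  funext g
  refine Prod.ext (funext fun k => ?_) ?_
  · by_cases hI : k ∈ I <;> by_cases hJ : k ∈ J <;> simp [syncMem, hI, hJ, Set.sdiff_sdiff_comm]
  · by_cases hI : (X g).2.1 ∈ I <;> by_cases hJ : (X g).2.1 ∈ J <;>
      simp [syncMem, hI, hJ, Set.sdiff_sdiff_comm]

lemma noRacingWr_syncMem {i : TID} {X : MemEvs Addr TID} {g : Addr} (I : Set TID)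
    (h : noRacingWr i (X g).2) : noRacingWr i (syncMem I X g).2 := by
  simp only [syncMem]
  split
  · exact h.imp id fun h hm => h hm.1
  · exact h

lemma noRacingRd_syncMem {i : TID} {X : MemEvs Addr TID} {g : Addr} (I : Set TID)
    (h : noRacingRd i (X g).1) : noRacingRd i (syncMem I X g).1 := by
  refine fun k => (h k).imp id fun h => ?_
  simp only [syncMem]
  split <;> simp [h]

def RacierFor (i : TID) (X X' : MemEvs Addr TID) : Prop :=
  ∀ g, (¬ noRacingRd i (X g).1 → ¬ noRacingRd i (X' g).1) ∧
    (¬ noRacingWr i (X g).2 → ¬ noRacingWr i (X' g).2)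

lemma racierFor_refl (i : TID) (X : MemEvs Addr TID) : RacierFor i X X :=
  fun _ => ⟨id, id⟩

lemma racierFor_syncMem {i : TID} {I : Set TID} (hi : i ∉ I) (X : MemEvs Addr TID) :
    RacierFor i X (syncMem I X) := by
  refine fun g => ⟨fun h => ?_, fun h => ?_⟩
  · simp only [noRacingRd, not_forall, not_or] at h ⊢
    obtain ⟨k, hik, hk⟩ := h
    exact ⟨k, hik, by simp only [syncMem]; split <;> simp [hk, hi]⟩
  · simp only [noRacingWr, not_or] at h ⊢
    simp only [syncMem]
    split <;> simp [h, hi]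

variable [DecidableEq Addr]

def writeEvs (i : TID) (g : Addr) (X : MemEvs Addr TID) : MemEvs Addr TID :=
  update X g ((X g).1, (i, Set.univ))

lemma writeEvs_apply_of_ne {g g' : Addr} (hg : g' ≠ g) (i : TID) (X : MemEvs Addr TID) :
    writeEvs i g X g' = X g' :=
  update_of_ne hg ..

lemma writeEvs_comm {g g' : Addr} (hg : g ≠ g') (i j : TID) (X : MemEvs Addr TID) :
    writeEvs i g (writeEvs j g' X) = writeEvs j g' (writeEvs i g X) := by
  simp [writeEvs, update_comm hg, update_of_ne hg, update_of_ne hg.symm]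

lemma syncMem_writeEvs {i : TID} {I : Set TID} (hi : i ∉ I) (g : Addr) (X : MemEvs Addr TID) :
    syncMem I (writeEvs i g X) = writeEvs i g (syncMem I X) := by
  funext g'
  rcases eq_or_ne g' g with rfl | hg
  · simp [syncMem, writeEvs, hi]
  · exact (syncMem_apply_congr I (writeEvs_apply_of_ne hg ..)).trans
      (writeEvs_apply_of_ne hg ..).symm

lemma noRacingRd_writeEvs_of_ne {g g' : Addr} (hg : g' ≠ g) {i k : TID} {X : MemEvs Addr TID}
    (h : noRacingRd k (X g').1) : noRacingRd k (writeEvs i g X g').1 := by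
  rwa [writeEvs_apply_of_ne hg]

lemma noRacingWr_writeEvs_of_ne {g g' : Addr} (hg : g' ≠ g) {i k : TID} {X : MemEvs Addr TID}
    (h : noRacingWr k (X g').2) : noRacingWr k (writeEvs i g X g').2 := by
  rwa [writeEvs_apply_of_ne hg]

lemma racierFor_writeEvs {i j : TID} (hij : i ≠ j) (g : Addr) (X : MemEvs Addr TID) :
    RacierFor i X (writeEvs j g X) := by
  intro g'
  rcases eq_or_ne g' g with rfl | hg
  · simp [writeEvs, noRacingRd, noRacingWr, hij]
  · simp [writeEvs_apply_of_ne hg]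

variable [DecidableEq TID]

def readEvs (i : TID) (g : Addr) (X : MemEvs Addr TID) : MemEvs Addr TID :=
  update X g (update (X g).1 i Set.univ, (X g).2)

@[simp]
lemma readEvs_apply_snd (i : TID) (g g' : Addr) (X : MemEvs Addr TID) :
    (readEvs i g X g').2 = (X g').2 := by
  rcases eq_or_ne g' g with rfl | hg <;> simp [readEvs, *]

lemma readEvs_apply_of_ne {g g' : Addr} (hg : g' ≠ g) (i : TID) (X : MemEvs Addr TID) :
    readEvs i g X g' = X g' :=
  update_of_ne hg ..

lemma noRacingWr_readEvs {g g' : Addr} {i k : TID} {X : MemEvs Addr TID}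
    (h : noRacingWr k (X g').2) : noRacingWr k (readEvs i g X g').2 := by
  rwa [readEvs_apply_snd]

lemma noRacingRd_readEvs_of_ne {g g' : Addr} (hg : g' ≠ g) {i k : TID} {X : MemEvs Addr TID}
    (h : noRacingRd k (X g').1) : noRacingRd k (readEvs i g X g').1 := by
  rwa [readEvs_apply_of_ne hg]

lemma readEvs_comm {i j : TID} (hij : i ≠ j) (g g' : Addr) (X : MemEvs Addr TID) :
    readEvs i g (readEvs j g' X) = readEvs j g' (readEvs i g X) := by
  rcases eq_or_ne g g' with rfl | hg
  · simp [readEvs, update_comm hij]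
  · simp [readEvs, update_comm hg, update_of_ne hg, update_of_ne hg.symm]

lemma readEvs_writeEvs_comm {g g' : Addr} (hg : g ≠ g') (i j : TID) (X : MemEvs Addr TID) :
    readEvs i g (writeEvs j g' X) = writeEvs j g' (readEvs i g X) := by
  simp [readEvs, writeEvs, update_comm hg, update_of_ne hg, update_of_ne hg.symm]

lemma syncMem_readEvs {i : TID} {I : Set TID} (hi : i ∉ I) (g : Addr) (X : MemEvs Addr TID) :
    syncMem I (readEvs i g X) = readEvs i g (syncMem I X) := by
  funext g'
  rcases eq_or_ne g' g with rfl | hg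
  · refine Prod.ext (funext fun k => ?_) ?_
    · rcases eq_or_ne k i with rfl | hk
      · simp [syncMem, readEvs, hi]
      · by_cases hkI : k ∈ I <;> simp [syncMem, readEvs, hk, hkI]
    · rw [readEvs_apply_snd]
      exact syncMem_apply_snd_congr I (readEvs_apply_snd ..)
  · exact (syncMem_apply_congr I (readEvs_apply_of_ne hg ..)).trans
      (readEvs_apply_of_ne hg ..).symm

lemma racierFor_readEvs {i j : TID} (hij : i ≠ j) (g : Addr) (X : MemEvs Addr TID) :
    RacierFor i X (readEvs j g X) := by
  refine fun g' => ⟨fun h => ?_, by simp⟩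
  simp only [noRacingRd, not_forall, not_or] at h ⊢
  obtain ⟨k, hik, hk⟩ := h
  rcases eq_or_ne g' g with rfl | hg
  · rcases eq_or_ne k j with rfl | hkj
    · exact ⟨k, hik, by simp [readEvs]⟩
    · exact ⟨k, hik, by simpa [readEvs, hkj] using hk⟩
  · exact ⟨k, hik, by simpa [readEvs_apply_of_ne hg] using hk⟩

end MemEvs

section ThreadSteps

variable {Val C Reg Addr TID : Type} [DecidableEq Reg] [DecidableEq Addr] [DecidableEq TID]
  {op : Val → Val → Val} {κ : C → Val} {i j : TID} {X : MemEvs Addr TID} {G : Addr → Val}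

lemma CTStep.res_unique {R : Reg → Val} {T : ThreadProg C Reg Addr TID}
    {o o' : CTRes Val C Reg Addr TID}
    (h : CTStep op κ i X G R T o) (h' : CTStep op κ i X G R T o') : o = o' := by
  cases h <;> cases h' <;> first | rfl | tauto

lemma CTStep.not_at_sync {R : Reg → Val} {T : ThreadProg C Reg Addr TID}
    {o : CTRes Val C Reg Addr TID} (h : CTStep op κ i X G R T o) :
    T ≠ .ret ∧ ∀ I T', T ≠ .seq (.sync I) T' := by
  cases h <;> simp

lemma CTStep.err_of_racierFor {X' : MemEvs Addr TID} {R : Reg → Val}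
    {T : ThreadProg C Reg Addr TID} (h : CTStep op κ i X G R T .err) (hX : RacierFor i X X')
    (G' : Addr → Val) : CTStep op κ i X' G' R T .err := by
  cases h with
  | readBad hw => exact .readBad ((hX _).2 hw)
  | writeBad h => exact .writeBad (h.imp (hX _).1 (hX _).2)

lemma CTStep.racierFor_of_ne (hij : i ≠ j) {R R' : Reg → Val} {T T' : ThreadProg C Reg Addr TID}
    {X' : MemEvs Addr TID} {G' : Addr → Val} (h : CTStep op κ j X G R T (.ok X' G' R' T')) :
    RacierFor i X X' := by
  cases h with
  | const | binop | copy => exact racierFor_refl i X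
  | read => exact racierFor_readEvs hij _ X
  | write => exact racierFor_writeEvs hij _ X

lemma CTStep.syncMem {I : Set TID} (hi : i ∉ I) {R R' : Reg → Val}
    {T T' : ThreadProg C Reg Addr TID} {X' : MemEvs Addr TID} {G' : Addr → Val}
    (h : CTStep op κ i X G R T (.ok X' G' R' T')) :
    CTStep op κ i (syncMem I X) G R T (.ok (syncMem I X') G' R' T') := by
  cases h with
  | const => exact .const
  | binop => exact .binop
  | copy => exact .copy
  | read hw => exact syncMem_readEvs hi _ X ▸ .read (noRacingWr_syncMem I hw)
  | write hr hw =>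
    exact syncMem_writeEvs hi _ X ▸ .write (noRacingRd_syncMem I hr) (noRacingWr_syncMem I hw)

lemma CTStep.write_err_of_readEvs (hij : i ≠ j) {g : Addr} {R : Reg → Val} {r : Reg}
    {T : ThreadProg C Reg Addr TID} :
    CTStep op κ j (readEvs i g X) G R (.seq (.write g r) T) .err :=
  .writeBad (.inl fun h => (h i).elim hij.symm (by simp [readEvs]))

lemma CTStep.read_err_of_writeEvs (hij : i ≠ j) {g : Addr} {R : Reg → Val} {r : Reg}
    {T : ThreadProg C Reg Addr TID} :
    CTStep op κ j (writeEvs i g X) G R (.seq (.read r g) T) .err :=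
  .readBad (by simp [writeEvs, noRacingWr, hij.symm])

lemma CTStep.write_err_of_writeEvs (hij : i ≠ j) {g : Addr} {R : Reg → Val} {r : Reg}
    {T : ThreadProg C Reg Addr TID} :
    CTStep op κ j (writeEvs i g X) G R (.seq (.write g r) T) .err :=
  .writeBad (.inr (by simp [writeEvs, noRacingWr, hij.symm]))

lemma CTStep.read_of_eq {g : Addr} {R : Reg → Val} {r : Reg} {T : ThreadProg C Reg Addr TID}
    {X' : MemEvs Addr TID} {v : Val} (hw : noRacingWr i (X g).2) (hX : readEvs i g X = X')
    (hv : G g = v) : CTStep op κ i X G R (.seq (.read r g) T) (.ok X' G (update R r v) T) :=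
  hX ▸ hv ▸ .read hw

lemma CTStep.write_of_eq {g : Addr} {R : Reg → Val} {r : Reg} {T : ThreadProg C Reg Addr TID}
    {X' : MemEvs Addr TID} {G' : Addr → Val} (hr : noRacingRd i (X g).1)
    (hw : noRacingWr i (X g).2) (hX : writeEvs i g X = X') (hG : update G g (R r) = G') :
    CTStep op κ i X G R (.seq (.write g r) T) (.ok X' G' R T) :=
  hX ▸ hG ▸ .write hr hw

lemma CTStep.commute_or_race_of_read (hij : i ≠ j) {g : Addr} {r : Reg}
    {Ri Rj Rj' : Reg → Val} {Ti Tj Tj' : ThreadProg C Reg Addr TID} {Xj : MemEvs Addr TID}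
    {Gj : Addr → Val} (hwi : noRacingWr i (X g).2)
    (hj : CTStep op κ j X G Rj Tj (.ok Xj Gj Rj' Tj')) :
    (∃ X' G', CTStep op κ j (readEvs i g X) G Rj Tj (.ok X' G' Rj' Tj') ∧
        CTStep op κ i Xj Gj Ri (.seq (.read r g) Ti) (.ok X' G' (update Ri r (G g)) Ti)) ∨
      (CTStep op κ j (readEvs i g X) G Rj Tj .err ∧
        CTStep op κ i Xj Gj Ri (.seq (.read r g) Ti) .err) := by
  cases hj with
  | const | binop | copy => exact .inl ⟨_, _, by constructor, .read hwi⟩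
  | read hwj =>
    exact .inl ⟨_, _, .read (noRacingWr_readEvs hwj),
      .read_of_eq (noRacingWr_readEvs hwi) (readEvs_comm hij _ _ X) rfl⟩
  | @write g' _ _ hrj hwj =>
    by_cases hg : g = g'
    · subst hg
      exact .inr ⟨.write_err_of_readEvs hij, .read_err_of_writeEvs hij.symm⟩
    · exact .inl ⟨_, _,
        .write (noRacingRd_readEvs_of_ne (Ne.symm hg) hrj) (noRacingWr_readEvs hwj),
        .read_of_eq (noRacingWr_writeEvs_of_ne hg hwi) (readEvs_writeEvs_comm hg _ _ X)
          (update_of_ne hg ..)⟩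

lemma CTStep.commute_or_race_of_write (hij : i ≠ j) {g : Addr} {r : Reg}
    {Ri Rj Rj' : Reg → Val} {Ti Tj Tj' : ThreadProg C Reg Addr TID} {Xj : MemEvs Addr TID}
    {Gj : Addr → Val} (hri : noRacingRd i (X g).1) (hwi : noRacingWr i (X g).2)
    (hj : CTStep op κ j X G Rj Tj (.ok Xj Gj Rj' Tj')) :
    (∃ X' G', CTStep op κ j (writeEvs i g X) (update G g (Ri r)) Rj Tj (.ok X' G' Rj' Tj') ∧
        CTStep op κ i Xj Gj Ri (.seq (.write g r) Ti) (.ok X' G' Ri Ti)) ∨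
      (CTStep op κ j (writeEvs i g X) (update G g (Ri r)) Rj Tj .err ∧
        CTStep op κ i Xj Gj Ri (.seq (.write g r) Ti) .err) := by
  cases hj with
  | const | binop | copy => exact .inl ⟨_, _, by constructor, .write hri hwi⟩
  | read hwj =>
    exact (commute_or_race_of_read hij.symm hwj (.write hri hwi)).imp
      (fun ⟨X', G', hj', hi'⟩ => ⟨X', G', hi', hj'⟩) And.symm
  | @write g' _ _ hrj hwj =>
    by_cases hg : g = g'
    · subst hg
      exact .inr ⟨.write_err_of_writeEvs hij, .write_err_of_writeEvs hij.symm⟩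
    · exact .inl ⟨_, _,
        .write (noRacingRd_writeEvs_of_ne (Ne.symm hg) hrj)
          (noRacingWr_writeEvs_of_ne (Ne.symm hg) hwj),
        .write_of_eq (noRacingRd_writeEvs_of_ne hg hri) (noRacingWr_writeEvs_of_ne hg hwi)
          (writeEvs_comm hg _ _ X) (update_comm hg ..).symm⟩

lemma CTStep.commute_or_race (hij : i ≠ j) {Ri Ri' Rj Rj' : Reg → Val}
    {Ti Ti' Tj Tj' : ThreadProg C Reg Addr TID} {Xi Xj : MemEvs Addr TID} {Gi Gj : Addr → Val}
    (hi : CTStep op κ i X G Ri Ti (.ok Xi Gi Ri' Ti'))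
    (hj : CTStep op κ j X G Rj Tj (.ok Xj Gj Rj' Tj')) :
    (∃ X' G', CTStep op κ j Xi Gi Rj Tj (.ok X' G' Rj' Tj') ∧
        CTStep op κ i Xj Gj Ri Ti (.ok X' G' Ri' Ti')) ∨
      (CTStep op κ j Xi Gi Rj Tj .err ∧ CTStep op κ i Xj Gj Ri Ti .err) := by
  cases hi with
  | const | binop | copy => exact .inl ⟨_, _, hj, by constructor⟩
  | read hwi => exact commute_or_race_of_read hij hwi hj
  | write hri hwi => exact commute_or_race_of_write hij hri hwi hj

end ThreadSteps

section Sync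

variable {C Reg Addr TID : Type} {I J : Set TID} {P P' Q : TID → ThreadProg C Reg Addr TID}

def SyncStep (I : Set TID) (P P' : TID → ThreadProg C Reg Addr TID) : Prop :=
  (∀ i ∉ I, P' i = P i) ∧
    ∀ i ∈ I, (P i = .ret ∧ P' i = .ret) ∨ ∃ T, P i = .seq (.sync I) T ∧ P' i = T

lemma SyncStep.unique {P'' : TID → ThreadProg C Reg Addr TID} (h : SyncStep I P P')
    (h' : SyncStep I P P'') : P' = P'' := by
  funext k
  by_cases hk : k ∈ I
  · rcases h.2 k hk with ⟨hret, hP'⟩ | ⟨T, hT, hP'⟩ <;>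
      rcases h'.2 k hk with ⟨hret', hP''⟩ | ⟨T', hT', hP''⟩ <;> simp_all
  · rw [h.1 k hk, h'.1 k hk]

lemma SyncStep.update [DecidableEq TID] {i : TID} (hi : i ∉ I) (h : SyncStep I P P')
    (T : ThreadProg C Reg Addr TID) : SyncStep I (update P i T) (update P' i T) := by
  refine ⟨fun k hk => ?_, fun k hk => ?_⟩
  · rcases eq_or_ne k i with rfl | hki
    · simp
    · simp [update_of_ne hki, h.1 k hk]
  · have hki : k ≠ i := ne_of_mem_of_not_mem hk hi
    simpa [update_of_ne hki] using h.2 k hk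

lemma SyncStep.ret_of_ret {k : TID} (h : SyncStep I P P') (hk : P k = .ret) : P' k = .ret := by
  by_cases hkI : k ∈ I
  · rcases h.2 k hkI with ⟨_, h'⟩ | ⟨T, hT, _⟩
    · exact h'
    · simp [hk] at hT
  · rw [h.1 k hkI, hk]

lemma SyncStep.ret_of_mem_of_mem (hIJ : I ≠ J) (hP : SyncStep I P P') (hQ : SyncStep J P Q)
    {k : TID} (hkI : k ∈ I) (hkJ : k ∈ J) : P k = .ret := by
  rcases hP.2 k hkI with ⟨hk, _⟩ | ⟨T, hT, _⟩
  · exact hk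
  · rcases hQ.2 k hkJ with ⟨hk, _⟩ | ⟨T', hT', _⟩
    · exact hk
    · simp [hT] at hT'
      exact absurd hT'.1 hIJ

lemma SyncStep.comm (hIJ : I ≠ J) (hP : SyncStep I P P') (hQ : SyncStep J P Q) :
    ∃ P'', SyncStep J P' P'' ∧ SyncStep I Q P'' := by
  classical
  have hret {k} (hkI : k ∈ I) (hkJ : k ∈ J) := hP.ret_of_mem_of_mem hIJ hQ hkI hkJ
  refine ⟨fun k => if k ∈ I then P' k else Q k, ⟨fun k hkJ => ?_, fun k hkJ => ?_⟩,
    ⟨fun k hkI => by simp [hkI], fun k hkI => ?_⟩⟩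
  · by_cases hkI : k ∈ I
    · simp [hkI]
    · simp [hkI, hQ.1 k hkJ, hP.1 k hkI]
  · by_cases hkI : k ∈ I
    · exact .inl ⟨hP.ret_of_ret (hret hkI hkJ), by simpa [hkI] using hP.ret_of_ret (hret hkI hkJ)⟩
    · simpa [hkI, hP.1 k hkI] using hQ.2 k hkJ
  · by_cases hkJ : k ∈ J
    · exact .inl ⟨hQ.ret_of_ret (hret hkI hkJ), by simpa [hkI] using hP.ret_of_ret (hret hkI hkJ)⟩
    · simpa [hkI, hQ.1 k hkJ] using hP.2 k hkI

end Sync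

section Configs

variable {Val C Reg Addr TID : Type} [DecidableEq Reg] [DecidableEq Addr] [DecidableEq TID]
  {op : Val → Val → Val} {κ : C → Val} {i j : TID} {X : MemEvs Addr TID}
  {c : Config Val C Reg Addr TID}

lemma CTStep.notMem_of_syncStep {I : Set TID} {P' : TID → ThreadProg C Reg Addr TID}
    {o : CTRes Val C Reg Addr TID} (h : CTStep op κ i X c.G (c.R i) (c.P i) o)
    (hP : SyncStep I c.P P') : i ∉ I := by
  intro hi
  rcases hP.2 i hi with ⟨hret, _⟩ | ⟨T, hT, _⟩
  · exact h.not_at_sync.1 hret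
  · exact h.not_at_sync.2 I T hT

lemma CStep.schd_update (hij : i ≠ j) {Xj : MemEvs Addr TID} {Gj : Addr → Val}
    {Ri Rj : Reg → Val} {Ti Tj : ThreadProg C Reg Addr TID}
    (h : CTStep op κ j X c.G (c.R j) (c.P j) (.ok Xj Gj Rj Tj)) :
    CStep op κ (.ok X ⟨c.G, update c.R i Ri, update c.P i Ti⟩)
      (.ok Xj ⟨Gj, update (update c.R i Ri) j Rj, update (update c.P i Ti) j Tj⟩) :=
  .schd (c := ⟨c.G, _, _⟩) (by simpa [update_of_ne hij.symm] using h)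

lemma CStep.schdBad_update (hij : i ≠ j) {Ri : Reg → Val} {Ti : ThreadProg C Reg Addr TID}
    (h : CTStep op κ j X c.G (c.R j) (c.P j) .err) :
    CStep op κ (.ok X ⟨c.G, update c.R i Ri, update c.P i Ti⟩) .err :=
  .schdBad (c := ⟨c.G, _, _⟩) (i := j) (by simpa [update_of_ne hij.symm] using h)

lemma CStep.join_schd_schd {Xi Xj : MemEvs Addr TID} {Gi Gj : Addr → Val} {Ri Rj : Reg → Val}
    {Ti Tj : ThreadProg C Reg Addr TID}
    (hi : CTStep op κ i X c.G (c.R i) (c.P i) (.ok Xi Gi Ri Ti))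
    (hj : CTStep op κ j X c.G (c.R j) (c.P j) (.ok Xj Gj Rj Tj)) :
    Join (ReflGen (CStep op κ)) (.ok Xi ⟨Gi, update c.R i Ri, update c.P i Ti⟩)
      (.ok Xj ⟨Gj, update c.R j Rj, update c.P j Tj⟩) := by
  obtain rfl | hij := eq_or_ne i j
  · cases hi.res_unique hj
    exact ⟨_, .refl, .refl⟩
  rcases hi.commute_or_race hij hj with ⟨X', G', hj', hi'⟩ | ⟨hj', hi'⟩
  · refine ⟨_, .single (CStep.schd_update (c := ⟨Gi, c.R, c.P⟩) hij hj'), ?_⟩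
    rw [update_comm hij, update_comm hij]
    exact .single (CStep.schd_update (c := ⟨Gj, c.R, c.P⟩) hij.symm hi')
  · exact ⟨_, .single (CStep.schdBad_update (c := ⟨Gi, c.R, c.P⟩) hij hj'),
      .single (CStep.schdBad_update (c := ⟨Gj, c.R, c.P⟩) hij.symm hi')⟩

lemma CStep.join_schd_schdBad {Xi : MemEvs Addr TID} {Gi : Addr → Val} {Ri : Reg → Val}
    {Ti : ThreadProg C Reg Addr TID}
    (hi : CTStep op κ i X c.G (c.R i) (c.P i) (.ok Xi Gi Ri Ti))
    (hj : CTStep op κ j X c.G (c.R j) (c.P j) .err) :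
    Join (ReflGen (CStep op κ)) (.ok Xi ⟨Gi, update c.R i Ri, update c.P i Ti⟩) .err := by
  obtain rfl | hij := eq_or_ne i j
  · cases hi.res_unique hj
  exact ⟨_, .single (CStep.schdBad_update (c := ⟨Gi, c.R, c.P⟩) hij
    (hj.err_of_racierFor (hi.racierFor_of_ne hij.symm) Gi)), .refl⟩

lemma CStep.join_schd_sync {I : Set TID} {P' : TID → ThreadProg C Reg Addr TID}
    {Xi : MemEvs Addr TID} {Gi : Addr → Val} {Ri : Reg → Val} {Ti : ThreadProg C Reg Addr TID}
    (hi : CTStep op κ i X c.G (c.R i) (c.P i) (.ok Xi Gi Ri Ti)) (hP : SyncStep I c.P P') :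
    Join (ReflGen (CStep op κ)) (.ok Xi ⟨Gi, update c.R i Ri, update c.P i Ti⟩)
      (.ok (syncMem I X) ⟨c.G, c.R, P'⟩) := by
  have hiI := hi.notMem_of_syncStep hP
  have hP' := hP.update hiI Ti
  refine ⟨_, .single (.sync hP'.1 hP'.2), .single (.schd (c := ⟨c.G, c.R, P'⟩) ?_)⟩
  simpa [hP.1 i hiI] using hi.syncMem hiI

lemma CStep.join_schdBad_sync {I : Set TID} {P' : TID → ThreadProg C Reg Addr TID}
    (hi : CTStep op κ i X c.G (c.R i) (c.P i) .err) (hP : SyncStep I c.P P') :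
    Join (ReflGen (CStep op κ)) .err (.ok (syncMem I X) ⟨c.G, c.R, P'⟩) := by
  have hiI := hi.notMem_of_syncStep hP
  refine ⟨_, .refl, .single (.schdBad (c := ⟨c.G, c.R, P'⟩) (i := i) ?_)⟩
  simpa [hP.1 i hiI] using hi.err_of_racierFor (racierFor_syncMem hiI X) c.G

lemma CStep.join_sync_sync {I J : Set TID} {P' Q : TID → ThreadProg C Reg Addr TID}
    (hP : SyncStep I c.P P') (hQ : SyncStep J c.P Q) :
    Join (ReflGen (CStep op κ)) (.ok (syncMem I X) ⟨c.G, c.R, P'⟩)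
      (.ok (syncMem J X) ⟨c.G, c.R, Q⟩) := by
  obtain rfl | hIJ := eq_or_ne I J
  · cases hP.unique hQ
    exact ⟨_, .refl, .refl⟩
  obtain ⟨P'', hJ, hI⟩ := hP.comm hIJ hQ
  refine ⟨_, .single (.sync hJ.1 hJ.2), ?_⟩
  rw [← syncMem_comm]
  exact .single (.sync hI.1 hI.2)

lemma CStep.join {a b d : CConfig Val C Reg Addr TID} (hb : CStep op κ a b)
    (hd : CStep op κ a d) : Join (ReflGen (CStep op κ)) b d := by
  have swap {b d : CConfig Val C Reg Addr TID} (h : Join (ReflGen (CStep op κ)) d b) : Join (ReflGen (CStep op κ)) b d :=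
    Join.symm.symm _ _ h
  cases hb with
  | schd hi =>
    cases hd with
    | schd hj => exact join_schd_schd hi hj
    | schdBad hj => exact join_schd_schdBad hi hj
    | sync hP1 hP2 => exact join_schd_sync hi ⟨hP1, hP2⟩
  | schdBad hi =>
    cases hd with
    | schd hj => exact swap (join_schd_schdBad hj hi)
    | schdBad => exact ⟨_, .refl, .refl⟩
    | sync hP1 hP2 => exact join_schdBad_sync hi ⟨hP1, hP2⟩
  | sync hP1 hP2 =>
    cases hd with
    | schd hj => exact swap (join_schd_sync hj ⟨hP1, hP2⟩)
    | schdBad hj => exact swap (join_schdBad_sync hj ⟨hP1, hP2⟩)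
    | sync hQ1 hQ2 => exact join_sync_sync ⟨hP1, hP2⟩ ⟨hQ1, hQ2⟩

end Configs

/-- **One-step diamond property** for the reflexive closure `↪⁼` of the checked
small-step relation `↪`: if `C ↪⁼ C₁` and `C ↪⁼ C₂` then there exists a
configuration `C'` with `C₁ ↪⁼ C'` and `C₂ ↪⁼ C'`. -/
theorem diamond_refl_closure
    {Val C Reg Addr TID : Type} [DecidableEq Reg] [DecidableEq Addr] [DecidableEq TID]
    (op : Val → Val → Val) (κ : C → Val)
    (c c₁ c₂ : CConfig Val C Reg Addr TID)
    (h₁ : Relation.ReflGen (CStep op κ) c c₁)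
    (h₂ : Relation.ReflGen (CStep op κ) c c₂) :
    ∃ c' : CConfig Val C Reg Addr TID,
      Relation.ReflGen (CStep op κ) c₁ c' ∧ Relation.ReflGen (CStep op κ) c₂ c' :=
  join_reflGen_of_diamond (fun _ _ _ => CStep.join) h₁ h₂

end Volta
end

section
/- For every unchecked trace there is a corresponding checked trace or a detected race: if (G, R, P) →* (G', R', P') in the language L, then for every memory-event context X either there exists X' such that (X, G, R, P) ↪* (X', G', R', P'), or (X, G, R, P) ↪* ⊥. -/
namespace Volta

/-!
Checked and unchecked rules differ only in the bookkeeping of the memory-event context, except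
that a read or write whose race check fails steps to `⊥`. So every unchecked step is matched,
from any context, by a checked step to the same configuration or to `⊥`; induction along the
trace, with the context generalized, lifts this to `→*`.
-/

section Simulation

variable {Val C Reg Addr TID : Type} [DecidableEq Reg] [DecidableEq Addr] [DecidableEq TID]
  {op : Val → Val → Val} {κ : C → Val}

theorem TStep.exists_cTStep_ok_or_err {G G' : Addr → Val} {R R' : Reg → Val}
    {T T' : ThreadProg C Reg Addr TID} (h : TStep op κ G R T G' R' T') (i : TID)
    (X : MemEvs Addr TID) :
    (∃ X', CTStep op κ i X G R T (.ok X' G' R' T')) ∨ CTStep op κ i X G R T .err := by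
  cases h with
  | const => exact .inl ⟨X, .const⟩
  | binop => exact .inl ⟨X, .binop⟩
  | copy => exact .inl ⟨X, .copy⟩
  | @read _ g _ =>
    by_cases hw : noRacingWr i (X g).2
    · exact .inl ⟨_, .read hw⟩
    · exact .inr (.readBad hw)
  | @write g _ _ =>
    by_cases hrw : noRacingRd i (X g).1 ∧ noRacingWr i (X g).2
    · exact .inl ⟨_, .write hrw.1 hrw.2⟩
    · exact .inr (.writeBad (not_and_or.mp hrw))

theorem Step.exists_cStep_ok_or_err {c c' : Config Val C Reg Addr TID} (h : Step op κ c c')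
    (X : MemEvs Addr TID) :
    (∃ X', CStep op κ (.ok X c) (.ok X' c')) ∨ CStep op κ (.ok X c) .err := by
  cases h with
  | @schd i _ _ _ ht =>
    rcases ht.exists_cTStep_ok_or_err i X with ⟨X', h'⟩ | h'
    · exact .inl ⟨X', .schd h'⟩
    · exact .inr (.schdBad h')
  | sync hout hin => exact .inl ⟨_, .sync hout hin⟩

theorem Steps.exists_cSteps_ok_or_err {c c' : Config Val C Reg Addr TID} (h : Steps op κ c c')
    (X : MemEvs Addr TID) :
    (∃ X', CSteps op κ (.ok X c) (.ok X' c')) ∨ CSteps op κ (.ok X c) .err := by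
  induction h using Relation.ReflTransGen.head_induction_on generalizing X with
  | refl => exact .inl ⟨X, .refl⟩
  | head hstep _ ih =>
    rcases hstep.exists_cStep_ok_or_err X with ⟨X₁, h₁⟩ | hbad
    · rcases ih X₁ with ⟨X', h₂⟩ | h₂
      · exact .inl ⟨X', .head h₁ h₂⟩
      · exact .inr (.head h₁ h₂)
    · exact .inr (.single hbad)

end Simulation

/-- For every unchecked trace there is a corresponding checked trace or a
detected race: if `(G, R, P) →* (G', R', P')`, then for every memory-event
context `X` either there exists `X'` such that `(X, G, R, P) ↪* (X', G', R', P')`,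
or `(X, G, R, P) ↪* ⊥`. -/
theorem checked_of_unchecked
    {Val C Reg Addr TID : Type} [DecidableEq Reg] [DecidableEq Addr] [DecidableEq TID]
    (op : Val → Val → Val) (κ : C → Val)
    (G G' : Addr → Val) (R R' : TID → Reg → Val)
    (P P' : TID → ThreadProg C Reg Addr TID)
    (h : Steps op κ ⟨G, R, P⟩ ⟨G', R', P'⟩) (X : MemEvs Addr TID) :
    (∃ X' : MemEvs Addr TID, CSteps op κ (.ok X ⟨G, R, P⟩) (.ok X' ⟨G', R', P'⟩)) ∨
      CSteps op κ (.ok X ⟨G, R, P⟩) .err :=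
  h.exists_cSteps_ok_or_err X

end Volta
end

section
/- Erasure of checking: if (X, G, R, P) ↪* (X', G', R', P') in the checked dynamics of the language L, then (G, R, P) →* (G', R', P') in the unchecked dynamics. -/
namespace Volta

variable {Val C Reg Addr TID : Type} [DecidableEq Reg] [DecidableEq Addr] [DecidableEq TID]
  {op : Val → Val → Val} {κ : C → Val}

theorem CTStep.tStep {i : TID} {X X' : MemEvs Addr TID} {G G' : Addr → Val} {R R' : Reg → Val}
    {T T' : ThreadProg C Reg Addr TID} (h : CTStep op κ i X G R T (.ok X' G' R' T')) :
    TStep op κ G R T G' R' T' := by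
  cases h <;> constructor

theorem CSteps.steps {X X' : MemEvs Addr TID} {c c' : Config Val C Reg Addr TID}
    (h : CSteps op κ (.ok X c) (.ok X' c')) : Steps op κ c c' := by
  generalize hy : CConfig.ok X' c' = y at h
  induction h generalizing X' c' with
  | refl => cases hy; exact .refl
  | tail _ hstep ih =>
    subst hy
    -- `schdBad` cannot occur: it steps to `⊥`
    cases hstep with
    | schd h => exact .tail (ih rfl) (.schd h.tStep)
    | sync hout hin => exact .tail (ih rfl) (.sync hout hin)

/-- **Erasure of checking**: if `(X, G, R, P) ↪* (X', G', R', P')` in the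
checked dynamics, then `(G, R, P) →* (G', R', P')` in the unchecked dynamics. -/
theorem unchecked_of_checked
    {Val C Reg Addr TID : Type} [DecidableEq Reg] [DecidableEq Addr] [DecidableEq TID]
    (op : Val → Val → Val) (κ : C → Val)
    (X X' : MemEvs Addr TID) (G G' : Addr → Val) (R R' : TID → Reg → Val)
    (P P' : TID → ThreadProg C Reg Addr TID)
    (h : CSteps op κ (.ok X ⟨G, R, P⟩) (.ok X' ⟨G', R', P'⟩)) :
    Steps op κ ⟨G, R, P⟩ ⟨G', R', P'⟩ :=
  h.steps

end Volta
end

section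
/- Race detection is independent of initial values: in the language L, for every memory-event context X and program P, if (X, G₁, R₁, P) ↪↓ ⊥ for some shared memory G₁ and register files R₁, then (X, G₂, R₂, P) ↪↓ ⊥ for every shared memory G₂ and register files R₂. -/
/-!
Values never influence control in the checked semantics: whether a thread may step, whether
its access is racy, and how the memory-event context and the programs evolve depend only on
`X` and `P`; the values in `G` and `R` only ever flow back into `G` and `R`. So forgetting the
values is a simulation of `↪`, and a trace to `⊥` from one choice of initial values can be
replayed from any other.
-/

namespace Relation.ReflTransGen

theorem exists_of_simulation {α β : Type*} {r : α → α → Prop} (f : α → β)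
    (hsim : ∀ a b a', r a b → f a = f a' → ∃ b', r a' b' ∧ f b = f b')
    {a b a' : α} (hab : ReflTransGen r a b) (ha : f a = f a') :
    ∃ b', ReflTransGen r a' b' ∧ f b = f b' := by
  induction hab with
  | refl => exact ⟨a', .refl, ha⟩
  | tail _ hbc ih =>
    obtain ⟨b', hab', hb⟩ := ih
    obtain ⟨c', hbc', hc⟩ := hsim _ _ _ hbc hb
    exact ⟨c', hab'.tail hbc', hc⟩

end Relation.ReflTransGen

namespace Volta

variable {Val C Reg Addr TID : Type}

def CTRes.eraseValues :
    CTRes Val C Reg Addr TID → Option (MemEvs Addr TID × ThreadProg C Reg Addr TID)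
  | .ok X _ _ T => some (X, T)
  | .err => none

def CConfig.eraseValues :
    CConfig Val C Reg Addr TID → Option (MemEvs Addr TID × (TID → ThreadProg C Reg Addr TID))
  | .ok X c => some (X, c.P)
  | .err => none

theorem CConfig.eraseValues_eq_none {s : CConfig Val C Reg Addr TID} :
    s.eraseValues = none ↔ s = .err := by
  cases s <;> simp [CConfig.eraseValues]

section Dynamics

variable [DecidableEq Reg] [DecidableEq Addr] [DecidableEq TID]
variable {op : Val → Val → Val} {κ : C → Val}

theorem CTStep.exists_eraseValues_eq {i : TID} {X : MemEvs Addr TID} {G : Addr → Val}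
    {R : Reg → Val} {p : ThreadProg C Reg Addr TID} {res : CTRes Val C Reg Addr TID}
    (h : CTStep op κ i X G R p res) (G' : Addr → Val) (R' : Reg → Val) :
    ∃ res', CTStep op κ i X G' R' p res' ∧ res.eraseValues = res'.eraseValues := by
  cases h with
  | const => exact ⟨_, .const, rfl⟩
  | binop => exact ⟨_, .binop, rfl⟩
  | copy => exact ⟨_, .copy, rfl⟩
  | read hw => exact ⟨_, .read hw, rfl⟩
  | write hr hw => exact ⟨_, .write hr hw, rfl⟩
  | readBad hw => exact ⟨_, .readBad hw, rfl⟩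
  | writeBad hbad => exact ⟨_, .writeBad hbad, rfl⟩

theorem CStep.exists_eraseValues_eq {s t s' : CConfig Val C Reg Addr TID}
    (h : CStep op κ s t) (hs : s.eraseValues = s'.eraseValues) :
    ∃ t', CStep op κ s' t' ∧ t.eraseValues = t'.eraseValues := by
  obtain ⟨X₀, c⟩ | _ := s
  case err => cases h
  obtain ⟨X, c'⟩ | _ := s'
  case err => cases hs
  obtain ⟨rfl, hP⟩ : X₀ = X ∧ c.P = c'.P := by simpa [CConfig.eraseValues] using hs
  cases h with
  | @schd _ _ i _ _ _ _ hstep =>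
    obtain ⟨_ | _, hstep', hres⟩ := (hP ▸ hstep).exists_eraseValues_eq c'.G (c'.R i)
    · cases hres
      exact ⟨_, .schd hstep', by simp [CConfig.eraseValues, hP]⟩
    · cases hres
  | @schdBad _ _ i hstep =>
    obtain ⟨_ | _, hstep', hres⟩ := (hP ▸ hstep).exists_eraseValues_eq c'.G (c'.R i)
    · cases hres
    · exact ⟨_, .schdBad hstep', rfl⟩
  | sync hfix hsync => exact ⟨_, .sync (c := c') (hP ▸ hfix) (hP ▸ hsync), rfl⟩

end Dynamics

/-- **Race detection is independent of initial values**: for every memory-event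
context `X` and program `P`, if `(X, G₁, R₁, P) ↪↓ ⊥` for some shared memory
`G₁` and register files `R₁`, then `(X, G₂, R₂, P) ↪↓ ⊥` for every shared
memory `G₂` and register files `R₂`. -/
theorem race_detection_independent_of_values
    {Val C Reg Addr TID : Type} [DecidableEq Reg] [DecidableEq Addr] [DecidableEq TID]
    (op : Val → Val → Val) (κ : C → Val)
    (X : MemEvs Addr TID) (P : TID → ThreadProg C Reg Addr TID)
    (G₁ : Addr → Val) (R₁ : TID → Reg → Val)
    (h : CSteps op κ (.ok X ⟨G₁, R₁, P⟩) .err) :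
    ∀ (G₂ : Addr → Val) (R₂ : TID → Reg → Val),
      CSteps op κ (.ok X ⟨G₂, R₂, P⟩) .err := by
  intro G₂ R₂
  obtain ⟨t, hsteps, ht⟩ := h.exists_of_simulation CConfig.eraseValues
    (fun _ _ _ hstep hs => hstep.exists_eraseValues_eq hs) (a' := .ok X ⟨G₂, R₂, P⟩) rfl
  rwa [CConfig.eraseValues_eq_none.mp ht.symm] at hsteps

end Volta
end

section
/- Data Race Freedom (soundness of race detection): if a program P of the language L has a data race, then for every memory-event context X, shared memory G, and register files R, the checked dynamics errors: (X, G, R, P) ↪↓ ⊥. -/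
/-!
The checked semantics simulates the unchecked one on the program component, whatever the memory,
registers and event context, until it possibly errors. So along the common prefix of the racing
traces the checked run either errors or reaches a configuration where both racing accesses are
enabled. Let `i` be the writing thread. Either its write is rejected, or it records `i` as last
writer with every thread unsynchronized, after which the access of the other thread violates
`noRacingWr`.
-/

namespace Volta

section Simulation

variable {Val C Reg Addr TID : Type} [DecidableEq Reg] [DecidableEq Addr] [DecidableEq TID]
variable {op : Val → Val → Val} {κ : C → Val}

theorem TStep.ctStep_err_or_exists {G G' : Addr → Val} {R R' : Reg → Val}
    {T T' : ThreadProg C Reg Addr TID} (h : TStep op κ G R T G' R' T') (i : TID)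
    (X : MemEvs Addr TID) (G₁ : Addr → Val) (R₁ : Reg → Val) :
    CTStep op κ i X G₁ R₁ T .err ∨ ∃ X' G₁' R₁', CTStep op κ i X G₁ R₁ T (.ok X' G₁' R₁' T') := by
  cases h with
  | const => exact .inr ⟨_, _, _, .const⟩
  | binop => exact .inr ⟨_, _, _, .binop⟩
  | copy => exact .inr ⟨_, _, _, .copy⟩
  | @read r g _ =>
    by_cases hw : noRacingWr i (X g).2
    · exact .inr ⟨_, _, _, .read hw⟩
    · exact .inl (.readBad hw)
  | @write g r _ =>
    by_cases hrw : noRacingRd i (X g).1 ∧ noRacingWr i (X g).2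
    · exact .inr ⟨_, _, _, .write hrw.1 hrw.2⟩
    · exact .inl (.writeBad (not_and_or.mp hrw))

theorem Step.cStep_err_or_exists {c c' : Config Val C Reg Addr TID} (h : Step op κ c c')
    (X : MemEvs Addr TID) {d : Config Val C Reg Addr TID} (hP : d.P = c.P) :
    CStep op κ (.ok X d) .err ∨
      ∃ X' d', CStep op κ (.ok X d) (.ok X' d') ∧ d'.P = c'.P := by
  cases h with
  | @schd i _ _ _ ht =>
    rcases ht.ctStep_err_or_exists i X d.G (d.R i) with herr | ⟨X', G', R', hok⟩
    · exact .inl (.schdBad (hP ▸ herr))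
    · exact .inr ⟨X', _, .schd (hP ▸ hok), by rw [hP]⟩
  | @sync I P' hout hin =>
    exact .inr ⟨syncMem I X, ⟨d.G, d.R, P'⟩, .sync (hP ▸ hout) (hP ▸ hin), rfl⟩

theorem Steps.cSteps_err_or_exists {c c' : Config Val C Reg Addr TID} (h : Steps op κ c c')
    (X : MemEvs Addr TID) {d : Config Val C Reg Addr TID} (hP : d.P = c.P) :
    CSteps op κ (.ok X d) .err ∨
      ∃ X' d', CSteps op κ (.ok X d) (.ok X' d') ∧ d'.P = c'.P := by
  induction h with
  | refl => exact .inr ⟨X, d, .refl, hP⟩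
  | tail _ hstep ih =>
    obtain herr | ⟨X', d', hd', hP'⟩ := ih
    · exact .inl herr
    obtain herr | ⟨X'', d'', hd'', hP''⟩ := hstep.cStep_err_or_exists X' hP'
    · exact .inl (hd'.tail herr)
    · exact .inr ⟨X'', d'', hd'.tail hd'', hP''⟩

end Simulation

section Race

variable {Val C Reg Addr TID : Type}

inductive AccessesAt (g : Addr) : Bool → ThreadProg C Reg Addr TID → Prop
  | read (r : Reg) (T : ThreadProg C Reg Addr TID) : AccessesAt g false (.seq (.read r g) T)
  | write (r : Reg) (T : ThreadProg C Reg Addr TID) : AccessesAt g true (.seq (.write g r) T)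

variable [DecidableEq Reg] [DecidableEq Addr] [DecidableEq TID]
variable {op : Val → Val → Val} {κ : C → Val}

theorem AccStep.accessesAt {i : TID} {g : Addr} {w : Bool} {c c' : Config Val C Reg Addr TID}
    (h : AccStep i g w c c') : AccessesAt g w (c.P i) := by
  cases h with
  | read h => exact h ▸ .read _ _
  | write h => exact h ▸ .write _ _

theorem CStep.err_of_accessesAt_of_not_noRacingWr {X : MemEvs Addr TID}
    {d : Config Val C Reg Addr TID} {j : TID} {g : Addr} {w : Bool}
    (hj : AccessesAt g w (d.P j)) (hw : ¬ noRacingWr j (X g).2) :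
    CStep op κ (.ok X d) .err := by
  generalize hT : d.P j = T at hj
  cases hj with
  | read => exact .schdBad (by rw [hT]; exact .readBad hw)
  | write => exact .schdBad (by rw [hT]; exact .writeBad (.inr hw))

theorem CSteps.err_of_write_of_accessesAt (X : MemEvs Addr TID)
    {d : Config Val C Reg Addr TID} {i j : TID} {g : Addr} {w : Bool} (hij : i ≠ j)
    (hi : AccessesAt g true (d.P i)) (hj : AccessesAt g w (d.P j)) :
    CSteps op κ (.ok X d) .err := by
  generalize hT : d.P i = Ti at hi
  obtain ⟨r, T⟩ := hi
  by_cases hrw : noRacingRd i (X g).1 ∧ noRacingWr i (X g).2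
  · refine .head (.schd (by rw [hT]; exact .write hrw.1 hrw.2))
      (.single (.err_of_accessesAt_of_not_noRacingWr (j := j) (g := g) (w := w) ?_ ?_))
    · simpa only [Function.update_of_ne hij.symm] using hj
    · simp [noRacingWr, hij.symm]
  · exact .single (.schdBad (by rw [hT]; exact .writeBad (not_and_or.mp hrw)))

end Race

/-- **Data Race Freedom** (soundness of race detection): if a program `P` has a
data race, then for every memory-event context `X`, shared memory `G`, and
register files `R`, the checked dynamics errors: `(X, G, R, P) ↪↓ ⊥`. -/
theorem data_race_freedom
    {Val C Reg Addr TID : Type} [DecidableEq Reg] [DecidableEq Addr] [DecidableEq TID]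
    (op : Val → Val → Val) (κ : C → Val)
    (P : TID → ThreadProg C Reg Addr TID)
    (h : HasDataRace op κ P) :
    ∀ (X : MemEvs Addr TID) (G : Addr → Val) (R : TID → Reg → Val),
      CSteps op κ (.ok X ⟨G, R, P⟩) .err := by
  obtain ⟨_, _, c, _, _, _, _, i, j, g, wi, wj, hij, hwrite, hsteps, hi, -, hj, -⟩ := h
  intro X G R
  obtain herr | ⟨X', d, hd, hP⟩ := hsteps.cSteps_err_or_exists X (d := ⟨G, R, P⟩) rfl
  · exact herr
  have hi := hP ▸ hi.accessesAt
  have hj := hP ▸ hj.accessesAt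
  refine hd.trans ?_
  rcases hwrite with rfl | rfl
  · exact CSteps.err_of_write_of_accessesAt X' hij hi hj
  · exact CSteps.err_of_write_of_accessesAt X' hij.symm hj hi

end Volta
end

section
/- The unchecked dynamics commutes with value maps: for all maps φ : (𝕍, ⊕) → (ℝ, ⊕) (functions satisfying φ(v₁ ⊕ v₂) = φ(v₁) ⊕ φ(v₂), applied pointwise to shared memory and register files), if (G, R, P) →* (G', R', P') over symbolic values 𝕍 in the language L, then (φ(G), φ(R), P) →* (φ(G'), φ(R'), P') over ℝ. -/
/-! Every rule moves values around unchanged or combines them with `⊕` and constants, which a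
map commuting with `⊕` and the constants preserves, while the programs evolve independently of
the values; so `φ` carries each step to a step, and hence traces to traces. -/

namespace Volta

section ValueMap

variable {V W C Reg Addr TID : Type}

def Config.map (φ : V → W) (c : Config V C Reg Addr TID) : Config W C Reg Addr TID :=
  ⟨φ ∘ c.G, fun i => φ ∘ c.R i, c.P⟩

variable [DecidableEq Reg] [DecidableEq Addr]
  {opV : V → V → V} {κV : C → V} {opW : W → W → W} {κW : C → W} {φ : V → W}

theorem TStep.map (hop : ∀ v₁ v₂, φ (opV v₁ v₂) = opW (φ v₁) (φ v₂))
    (hκ : ∀ c, φ (κV c) = κW c) {G G' : Addr → V} {R R' : Reg → V}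
    {T T' : ThreadProg C Reg Addr TID} (h : TStep opV κV G R T G' R' T') :
    TStep opW κW (φ ∘ G) (φ ∘ R) T (φ ∘ G') (φ ∘ R') T' := by
  cases h with
  | const => rw [Function.comp_update, hκ]; exact .const
  | binop => rw [Function.comp_update, hop]; exact .binop
  | copy => rw [Function.comp_update]; exact .copy
  | read => rw [Function.comp_update]; exact .read
  | write => rw [Function.comp_update]; exact .write

variable [DecidableEq TID]

theorem Step.map (hop : ∀ v₁ v₂, φ (opV v₁ v₂) = opW (φ v₁) (φ v₂))
    (hκ : ∀ c, φ (κV c) = κW c) {c c' : Config V C Reg Addr TID}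
    (h : Step opV κV c c') : Step opW κW (c.map φ) (c'.map φ) := by
  cases h with
  | @schd i G' R' T' ht =>
    have hR : (fun j => φ ∘ Function.update c.R i R' j) =
        Function.update (fun j => φ ∘ c.R j) i (φ ∘ R') :=
      Function.comp_update (φ ∘ ·) c.R i R'
    rw [Config.map, Config.map, hR]
    exact .schd (ht.map hop hκ)
  | sync hout hin => exact .sync hout hin

theorem Steps.map (hop : ∀ v₁ v₂, φ (opV v₁ v₂) = opW (φ v₁) (φ v₂))
    (hκ : ∀ c, φ (κV c) = κW c) {c c' : Config V C Reg Addr TID}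
    (h : Steps opV κV c c') : Steps opW κW (c.map φ) (c'.map φ) :=
  Relation.ReflTransGen.lift (Config.map φ) (fun _ _ hs => Step.map hop hκ hs) _ _ h

end ValueMap

/-- The unchecked dynamics commutes with value maps: for all maps
`φ : (𝕍, ⊕) → (ℝ, ⊕)` (functions commuting with the value operations, applied
pointwise to shared memory and register files), if `(G, R, P) →* (G', R', P')`
over symbolic values `𝕍`, then `(φ(G), φ(R), P) →* (φ(G'), φ(R'), P')` over `ℝ`. -/
theorem steps_map
    {V C Reg Addr TID : Type} [DecidableEq Reg] [DecidableEq Addr] [DecidableEq TID]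
    (opV : V → V → V) (κV : C → V) (opR : ℝ → ℝ → ℝ) (κR : C → ℝ)
    (φ : V → ℝ)
    (hop : ∀ v₁ v₂ : V, φ (opV v₁ v₂) = opR (φ v₁) (φ v₂))
    (hκ : ∀ c : C, φ (κV c) = κR c)
    (G G' : Addr → V) (R R' : TID → Reg → V)
    (P P' : TID → ThreadProg C Reg Addr TID)
    (h : Steps opV κV ⟨G, R, P⟩ ⟨G', R', P'⟩) :
    Steps opR κR ⟨fun g => φ (G g), fun i r => φ (R i r), P⟩
      ⟨fun g => φ (G' g), fun i r => φ (R' i r), P'⟩ :=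
  h.map hop hκ

end Volta
end
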